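/- Discrete energy rate identity with general penalty parameters: suppose U : ℝ → ℝ^{N+1} is differentiable and satisfies, for all t, P U′(t) + a Q U(t) = E B⁽ᴺ⁾ Dₓ U(t) − (√E Dₓ)ᵀ P (√E Dₓ) U(t) + SAT(t), where SAT(t) = σ₀ e₀·(a·U₀(t) − ε₀·(Dₓ U(t))₀) + σ_N e_N·(−ε_N·(Dₓ U(t))_N) with arbitrary real σ₀, σ_N. Then for every t, d/dt (U(t)ᵀ P U(t)) + 2 (√E Dₓ U(t))ᵀ P (√E Dₓ U(t)) = −a·(U₀(t)² + U_N(t)²) + 2(σ₀ + 1)·(a·U₀(t)² − ε₀·U₀(t)·(Dₓ U(t))₀) + 2(σ_N − 1)·(−ε_N·U_N(t)·(Dₓ U(t))_N). -/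

import Mathlib

open Matrix

/-! Since `P` is symmetric, `d/dt (Uᵀ P U) = 2 Uᵀ (P U')`, and `P U'` is read off the scheme.
In `Uᵀ (P U')` the SBP property turns `2 Uᵀ Q U` into `Uᵀ B U = U_N² − U₀²`, the diagonal
boundary matrix keeps only the endpoint terms of `Uᵀ E B Dₓ U`, the SAT terms only see `U₀` and
`U_N`, and the viscous term is the `P`-norm of `√E Dₓ U`. -/

def Bmat (n : ℕ) : Matrix (Fin (n+1)) (Fin (n+1)) ℝ :=
  Matrix.of fun i j =>
    if i = j ∧ i = Fin.last n then 1 else if i = j ∧ i = 0 then -1 else 0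

namespace Matrix

variable {m n R : Type*} [Fintype m] [Fintype n] [CommSemiring R]

lemma two_mul_dotProduct_mulVec_self (Q : Matrix n n R) (u : n → R) :
    2 * (u ⬝ᵥ Q *ᵥ u) = u ⬝ᵥ (Q + Qᵀ) *ᵥ u := by
  rw [add_mulVec, dotProduct_add, dotProduct_mulVec u Qᵀ, vecMul_transpose, dotProduct_comm _ u,
    two_mul]

lemma dotProduct_transpose_mul_mul_mulVec (A : Matrix m n R) (P : Matrix m m R) (u : n → R) :
    u ⬝ᵥ (Aᵀ * P * A) *ᵥ u = (A *ᵥ u) ⬝ᵥ P *ᵥ (A *ᵥ u) := by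
  rw [← mulVec_mulVec, ← mulVec_mulVec, dotProduct_mulVec, vecMul_transpose]

lemma IsSymm.dotProduct_mulVec_comm {P : Matrix n n R} (hP : P.IsSymm) (u v : n → R) :
    u ⬝ᵥ P *ᵥ v = v ⬝ᵥ P *ᵥ u := by
  rw [dotProduct_mulVec, ← mulVec_transpose, hP.eq, dotProduct_comm]

end Matrix

section Deriv

variable {𝕜 m n : Type*} [NontriviallyNormedField 𝕜] [Fintype n] {U V : 𝕜 → n → 𝕜}
  {U' V' : n → 𝕜} {t : 𝕜}

theorem HasDerivAt.dotProduct (hU : HasDerivAt U U' t) (hV : HasDerivAt V V' t) :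
    HasDerivAt (fun τ => U τ ⬝ᵥ V τ) (U' ⬝ᵥ V t + U t ⬝ᵥ V') t := by
  rw [hasDerivAt_pi] at hU hV
  rw [_root_.dotProduct, _root_.dotProduct, ← Finset.sum_add_distrib]
  exact HasDerivAt.fun_sum fun i _ => (hU i).mul (hV i)

theorem HasDerivAt.mulVec (A : Matrix m n 𝕜) (hU : HasDerivAt U U' t) :
    HasDerivAt (fun τ => A *ᵥ U τ) (A *ᵥ U') t :=
  hasDerivAt_pi.2 fun i =>
    ((hasDerivAt_const t (A i)).dotProduct hU).congr_deriv (by simp [Matrix.mulVec])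

theorem HasDerivAt.dotProduct_mulVec_self {P : Matrix n n 𝕜} (hP : P.IsSymm)
    (hU : HasDerivAt U U' t) :
    HasDerivAt (fun τ => U τ ⬝ᵥ P *ᵥ U τ) (2 * (U t ⬝ᵥ P *ᵥ U')) t := by
  convert hU.dotProduct (hU.mulVec P) using 1
  rw [hP.dotProduct_mulVec_comm U', two_mul]

end Deriv

lemma Bmat_eq_diagonal (n : ℕ) :
    Bmat n = diagonal fun i => if i = Fin.last n then 1 else if i = 0 then -1 else 0 := by
  ext i j
  by_cases h : i = j <;> simp [Bmat, h]

lemma dotProduct_Bmat_mulVec {n : ℕ} (hn : 1 ≤ n) (u v : Fin (n+1) → ℝ) :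
    u ⬝ᵥ Bmat n *ᵥ v = u (Fin.last n) * v (Fin.last n) - u 0 * v 0 := by
  have hne : Fin.last n ≠ 0 := by simp [Fin.ext_iff]; omega
  rw [Bmat_eq_diagonal, dotProduct, Fintype.sum_eq_add (Fin.last n) 0 hne]
  · simp [mulVec_diagonal, hne.symm]
    ring
  · rintro i ⟨hi, hi0⟩
    simp [mulVec_diagonal, hi, hi0]

lemma dotProduct_diagonal_mul_Bmat_mulVec {n : ℕ} (hn : 1 ≤ n) (ε u v : Fin (n+1) → ℝ) :
    u ⬝ᵥ (diagonal ε * Bmat n) *ᵥ v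
      = ε (Fin.last n) * u (Fin.last n) * v (Fin.last n) - ε 0 * u 0 * v 0 := by
  rw [← mulVec_mulVec, dotProduct_mulVec, dotProduct_Bmat_mulVec hn]
  simp only [vecMul_diagonal]
  ring

theorem stmt6_general (N : ℕ) (hN : 1 ≤ N) (a σ₀ σN : ℝ)
    (P Q : Matrix (Fin (N+1)) (Fin (N+1)) ℝ)
    (hP : P.PosDef) (hSBP : Q + Qᵀ = Bmat N)
    (ε : Fin (N+1) → ℝ)
    (E sqrtE Dx : Matrix (Fin (N+1)) (Fin (N+1)) ℝ)
    (hE : E = Matrix.diagonal ε)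
    (U : ℝ → Fin (N+1) → ℝ) (hU : Differentiable ℝ U)
    (hode : ∀ t : ℝ,
      P.mulVec (deriv U t) + a • Q.mulVec (U t)
        = (E * Bmat N * Dx).mulVec (U t)
          - ((sqrtE * Dx)ᵀ * P * (sqrtE * Dx)).mulVec (U t)
          + ((σ₀ * (a * U t 0 - ε 0 * Dx.mulVec (U t) 0)) • (Pi.single 0 1 : Fin (N+1) → ℝ)
             + (σN * (-(ε (Fin.last N) * Dx.mulVec (U t) (Fin.last N))))
                • (Pi.single (Fin.last N) 1 : Fin (N+1) → ℝ))) :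
    ∀ t : ℝ,
      HasDerivAt (fun τ => U τ ⬝ᵥ P.mulVec (U τ))
        (-a * ((U t 0)^2 + (U t (Fin.last N))^2)
          + 2 * (σ₀ + 1) * (a * (U t 0)^2 - ε 0 * U t 0 * Dx.mulVec (U t) 0)
          + 2 * (σN - 1) * (-(ε (Fin.last N) * U t (Fin.last N)
              * Dx.mulVec (U t) (Fin.last N)))
          - 2 * ((sqrtE * Dx).mulVec (U t) ⬝ᵥ P.mulVec ((sqrtE * Dx).mulVec (U t)))) t := by
  intro t
  have hPsymm : P.IsSymm := isHermitian_iff_isSymm.mp hP.isHermitian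
  have hQ : 2 * (U t ⬝ᵥ Q *ᵥ U t) = U t (Fin.last N) ^ 2 - U t 0 ^ 2 := by
    rw [two_mul_dotProduct_mulVec_self, hSBP, dotProduct_Bmat_mulVec hN, sq, sq]
  refine ((hU t).hasDerivAt.dotProduct_mulVec_self hPsymm).congr_deriv ?_
  rw [eq_sub_of_add_eq (hode t)]
  simp only [dotProduct_sub, dotProduct_add, dotProduct_smul, dotProduct_single, smul_eq_mul]
  rw [hE, ← mulVec_mulVec _ _ Dx, dotProduct_diagonal_mul_Bmat_mulVec hN,
    dotProduct_transpose_mul_mul_mulVec]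
  linear_combination (-a) * hQ

/-- Discrete energy rate identity with general penalty parameters `σ₀, σ_N`:
if `P U′ + a Q U = E B Dₓ U − (√E Dₓ)ᵀ P (√E Dₓ) U + SAT` with
`SAT = σ₀ e₀ (a U₀ − ε₀ (Dₓ U)₀) + σ_N e_N (−ε_N (Dₓ U)_N)`, then for every `t`,
`d/dt (Uᵀ P U) + 2 (√E Dₓ U)ᵀ P (√E Dₓ U)
  = −a (U₀² + U_N²) + 2(σ₀+1)(a U₀² − ε₀ U₀ (Dₓ U)₀) + 2(σ_N−1)(−ε_N U_N (Dₓ U)_N)`. -/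
theorem stmt6 (N : ℕ) (hN : 1 ≤ N) (a σ₀ σN : ℝ)
    (P Q : Matrix (Fin (N+1)) (Fin (N+1)) ℝ)
    (hP : P.PosDef) (hSBP : Q + Qᵀ = Bmat N)
    (ε : Fin (N+1) → ℝ) (hε : ∀ i, 0 ≤ ε i)
    (E sqrtE Dx : Matrix (Fin (N+1)) (Fin (N+1)) ℝ)
    (hE : E = Matrix.diagonal ε)
    (hsqrtE : sqrtE = Matrix.diagonal fun i => Real.sqrt (ε i))
    (hDx : Dx = P⁻¹ * Q)
    (U : ℝ → Fin (N+1) → ℝ) (hU : Differentiable ℝ U)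
    (hode : ∀ t : ℝ,
      P.mulVec (deriv U t) + a • Q.mulVec (U t)
        = (E * Bmat N * Dx).mulVec (U t)
          - ((sqrtE * Dx)ᵀ * P * (sqrtE * Dx)).mulVec (U t)
          + ((σ₀ * (a * U t 0 - ε 0 * Dx.mulVec (U t) 0)) • (Pi.single 0 1 : Fin (N+1) → ℝ)
             + (σN * (-(ε (Fin.last N) * Dx.mulVec (U t) (Fin.last N))))
                • (Pi.single (Fin.last N) 1 : Fin (N+1) → ℝ))) :
    ∀ t : ℝ,
      HasDerivAt (fun τ => U τ ⬝ᵥ P.mulVec (U τ))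
        (-a * ((U t 0)^2 + (U t (Fin.last N))^2)
          + 2 * (σ₀ + 1) * (a * (U t 0)^2 - ε 0 * U t 0 * Dx.mulVec (U t) 0)
          + 2 * (σN - 1) * (-(ε (Fin.last N) * U t (Fin.last N)
              * Dx.mulVec (U t) (Fin.last N)))
          - 2 * ((sqrtE * Dx).mulVec (U t) ⬝ᵥ P.mulVec ((sqrtE * Dx).mulVec (U t)))) t :=
  stmt6_general N hN a σ₀ σN P Q hP hSBP ε E sqrtE Dx hE U hU hode
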